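/- arXiv:1505.00160 — 3 statements merged into one kernel-verified Lean document; each statement's English description precedes it below -/
import Mathlib

section
/- Let X and Xα be real Banach spaces, C > 0, and ι : Xα → X an injective continuous linear map with ‖ι z‖_X ≤ C ‖z‖_{Xα} for all z ∈ Xα. Let α ∈ (0,1) and M, c, m₀, B > 0, and suppose Sα(t) : X → Xα, for t > 0, is a family of linear maps satisfying ‖Sα(t) x‖_{Xα} ≤ M e^{−c t} t^{−α} ‖x‖_X for all t > 0 and x ∈ X. Let g : ℝ → X be strongly measurable with ‖g(τ)‖_X ≤ m₀ for all τ ∈ ℝ, and let u : ℝ → Xα satisfy ‖u(t)‖_{Xα} ≤ B for all t ≤ 0 and, for all t' < t, the integral identity u(t) = Sα(t−t')(ι(u(t'))) + ∫_{t'}^{t} Sα(t−τ)(g(τ)) dτ, where the Bochner integral on the right is assumed to exist in Xα. Then ‖u(t)‖_{Xα} ≤ m₀ M (e^{−c}/c + 1/(1−α)) for every t ∈ ℝ. -/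
/-!
Start the variation-of-constants formula at `t - T` with `T ≥ 1` and `t - T ≤ 0`. The free term is
at most `M ‖ι‖ B e^{-cT}`, which vanishes as `T → ∞`, while the Duhamel integral is bounded by
`m₀ M ∫₀^T e^{-cs} s^{-α} ds`, and this kernel integral is at most `1/(1-α)` on `[0, 1]`
(drop `e^{-cs} ≤ 1`) plus `e^{-c}/c` on `[1, T]` (drop `s^{-α} ≤ 1`), uniformly in `T`.
-/

open MeasureTheory intervalIntegral Filter Real Topology

lemma integral_exp_neg_mul_le {c : ℝ} (hc : 0 < c) (T : ℝ) :
    ∫ s in (1 : ℝ)..T, exp (-c * s) ≤ exp (-c) / c := by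
  have h : ∫ s in (1 : ℝ)..T, exp (-c * s) = (exp (-c) - exp (-c * T)) / c := by
    rw [integral_comp_mul_left exp (neg_ne_zero.mpr hc.ne'), integral_exp, mul_one, smul_eq_mul]
    field_simp
    ring
  rw [h]
  gcongr
  linarith [exp_pos (-c * T)]

lemma integral_rpow_neg_zero_one {α : ℝ} (hα : α < 1) :
    ∫ s in (0 : ℝ)..1, s ^ (-α) = 1 / (1 - α) := by
  rw [integral_rpow (Or.inl (by linarith)), one_rpow, zero_rpow (by linarith)]
  ring

lemma intervalIntegrable_exp_neg_mul_mul_rpow (c : ℝ) {α : ℝ} (hα : α < 1) (a b : ℝ) :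
    IntervalIntegrable (fun s => exp (-c * s) * s ^ (-α)) volume a b :=
  (intervalIntegrable_rpow' (by linarith)).continuousOn_mul (by fun_prop)

lemma integral_exp_neg_mul_mul_rpow_le {c α : ℝ} (hc : 0 < c) (hα₀ : 0 ≤ α) (hα₁ : α < 1)
    {T : ℝ} (hT : 1 ≤ T) :
    ∫ s in (0 : ℝ)..T, exp (-c * s) * s ^ (-α) ≤ exp (-c) / c + 1 / (1 - α) := by
  have hint := intervalIntegrable_exp_neg_mul_mul_rpow c hα₁
  rw [← integral_add_adjacent_intervals (hint 0 1) (hint 1 T)]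
  have near : ∫ s in (0 : ℝ)..1, exp (-c * s) * s ^ (-α) ≤ 1 / (1 - α) := by
    rw [← integral_rpow_neg_zero_one hα₁]
    refine integral_mono_on zero_le_one (hint 0 1) (intervalIntegrable_rpow' (by linarith)) ?_
    intro s ⟨hs₀, _⟩
    have : exp (-c * s) ≤ 1 := exp_le_one_iff.mpr (by nlinarith)
    exact mul_le_of_le_one_left (rpow_nonneg hs₀ _) this
  have far : ∫ s in (1 : ℝ)..T, exp (-c * s) * s ^ (-α) ≤ exp (-c) / c := by
    refine le_trans ?_ (integral_exp_neg_mul_le hc T)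
    refine integral_mono_on hT (hint 1 T)
      ((by fun_prop : Continuous fun s => exp (-c * s)).intervalIntegrable 1 T) ?_
    intro s ⟨hs₁, _⟩
    exact mul_le_of_le_one_right (exp_pos _).le (rpow_le_one_of_one_le_of_nonpos hs₁ (by linarith))
  linarith

lemma norm_integral_comp_sub_le {E F : Type*} [NormedAddCommGroup E] [NormedAddCommGroup F]
    [NormedSpace ℝ F] {S : ℝ → E → F} {M c α m : ℝ} (hM : 0 ≤ M) (hα : α < 1)
    (hS : ∀ t, 0 < t → ∀ x, ‖S t x‖ ≤ M * exp (-c * t) * t ^ (-α) * ‖x‖)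
    {g : ℝ → E} (hg : ∀ τ, ‖g τ‖ ≤ m) {t' t : ℝ} (htt' : t' ≤ t) :
    ‖∫ τ in t'..t, S (t - τ) (g τ)‖ ≤ M * m * ∫ s in (0 : ℝ)..t - t', exp (-c * s) * s ^ (-α) := by
  have hbound : IntervalIntegrable
      (fun τ => M * m * (exp (-c * (t - τ)) * (t - τ) ^ (-α))) volume t' t := by
    simpa using
      ((intervalIntegrable_exp_neg_mul_mul_rpow c hα (t - t') 0).comp_sub_left t).const_mul (M * m)
  calc ‖∫ τ in t'..t, S (t - τ) (g τ)‖
      ≤ ∫ τ in t'..t, M * m * (exp (-c * (t - τ)) * (t - τ) ^ (-α)) := by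
        refine norm_integral_le_of_norm_le htt' ?_ hbound
        filter_upwards [Measure.ae_ne volume t] with τ hτt ⟨_, hτ⟩
        have hpos : 0 < t - τ := sub_pos.mpr (lt_of_le_of_ne hτ hτt)
        calc ‖S (t - τ) (g τ)‖ ≤ M * exp (-c * (t - τ)) * (t - τ) ^ (-α) * ‖g τ‖ := hS _ hpos _
          _ ≤ M * exp (-c * (t - τ)) * (t - τ) ^ (-α) * m := by gcongr; exact hg τ
          _ = _ := by ring
    _ = M * m * ∫ s in (0 : ℝ)..t - t', exp (-c * s) * s ^ (-α) := by
        rw [intervalIntegral.integral_const_mul, integral_comp_sub_left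
          (fun s => exp (-c * s) * s ^ (-α)) t, sub_self]

theorem stmt_2_general
    {Xa X : Type*} [NormedAddCommGroup Xa] [NormedSpace ℝ Xa]
    [NormedAddCommGroup X] [NormedSpace ℝ X]
    (ι : Xa →L[ℝ] X)
    (α M c m₀ B : ℝ) (hα : α ∈ Set.Ioo (0 : ℝ) 1) (hM : 0 < M) (hc : 0 < c)
    (Sα : ℝ → (X →ₗ[ℝ] Xa))
    (hS : ∀ t : ℝ, 0 < t → ∀ x : X,
      ‖Sα t x‖ ≤ M * Real.exp (-c * t) * t ^ (-α) * ‖x‖)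
    (g : ℝ → X) (hgb : ∀ τ : ℝ, ‖g τ‖ ≤ m₀)
    (u : ℝ → Xa) (hub : ∀ t : ℝ, t ≤ 0 → ‖u t‖ ≤ B)
    (hu : ∀ t' t : ℝ, t' < t →
      u t = Sα (t - t') (ι (u t')) + ∫ τ in t'..t, Sα (t - τ) (g τ)) :
    ∀ t : ℝ, ‖u t‖ ≤ m₀ * M * (Real.exp (-c) / c + 1 / (1 - α)) := by
  intro t
  obtain ⟨hα₀, hα₁⟩ := hα
  set K := exp (-c) / c + 1 / (1 - α)
  have bound : ∀ T, 1 ≤ T → t ≤ T → ‖u t‖ ≤ M * ‖ι‖ * B * exp (-c * T) + m₀ * M * K := by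
    intro T hT hTt
    rw [hu (t - T) t (by linarith), sub_sub_cancel]
    refine (norm_add_le _ _).trans (add_le_add ?_ ?_)
    · calc ‖Sα T (ι (u (t - T)))‖ ≤ M * exp (-c * T) * T ^ (-α) * ‖ι (u (t - T))‖ :=
            hS T (by linarith) _
        _ ≤ M * exp (-c * T) * 1 * (‖ι‖ * B) := by
            gcongr
            · exact rpow_le_one_of_one_le_of_nonpos hT (by linarith)
            · exact ι.le_opNorm_of_le (hub _ (by linarith))
        _ = M * ‖ι‖ * B * exp (-c * T) := by ring
    · calc ‖∫ τ in t - T..t, Sα (t - τ) (g τ)‖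
          ≤ M * m₀ * ∫ s in (0 : ℝ)..t - (t - T), exp (-c * s) * s ^ (-α) :=
            norm_integral_comp_sub_le (S := fun t => Sα t) hM.le hα₁ hS hgb (by linarith)
        _ ≤ M * m₀ * K := by
            have hm₀ : 0 ≤ m₀ := (norm_nonneg _).trans (hgb 0)
            gcongr
            rw [sub_sub_cancel]
            exact integral_exp_neg_mul_mul_rpow_le hc hα₀.le hα₁ hT
        _ = m₀ * M * K := by ring
  have decay :
      Tendsto (fun T => M * ‖ι‖ * B * exp (-c * T) + m₀ * M * K) atTop (𝓝 (m₀ * M * K)) := by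
    have : Tendsto (fun T => exp (-c * T)) atTop (𝓝 0) :=
      tendsto_exp_comp_nhds_zero.mpr (tendsto_id.const_mul_atTop_of_neg (neg_lt_zero.mpr hc))
    simpa using (this.const_mul (M * ‖ι‖ * B)).add_const (m₀ * M * K)
  exact ge_of_tendsto decay <| by
    filter_upwards [eventually_ge_atTop 1, eventually_ge_atTop t] using bound

/-- Abstract form of inequality (fs9) from the proof of Lemma 3.3: a full solution
of the variation-of-constants formula in the "positive" spectral part, bounded
on `(-∞, 0]`, satisfies the uniform bound `‖u(t)‖ ≤ m₀ M (e^{−c}/c + 1/(1−α))`. -/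
theorem stmt_2
    {Xa X : Type*} [NormedAddCommGroup Xa] [NormedSpace ℝ Xa] [CompleteSpace Xa]
    [NormedAddCommGroup X] [NormedSpace ℝ X] [CompleteSpace X]
    (C : ℝ) (hC : 0 < C) (ι : Xa →L[ℝ] X) (hι : Function.Injective ι)
    (hιnorm : ∀ z : Xa, ‖ι z‖ ≤ C * ‖z‖)
    (α M c m₀ B : ℝ) (hα : α ∈ Set.Ioo (0 : ℝ) 1) (hM : 0 < M) (hc : 0 < c)
    (hm₀ : 0 < m₀) (hB : 0 < B)
    (Sα : ℝ → (X →ₗ[ℝ] Xa))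
    (hS : ∀ t : ℝ, 0 < t → ∀ x : X,
      ‖Sα t x‖ ≤ M * Real.exp (-c * t) * t ^ (-α) * ‖x‖)
    (g : ℝ → X) (hg : StronglyMeasurable g) (hgb : ∀ τ : ℝ, ‖g τ‖ ≤ m₀)
    (u : ℝ → Xa) (hub : ∀ t : ℝ, t ≤ 0 → ‖u t‖ ≤ B)
    (hint : ∀ t' t : ℝ, t' < t →
      IntervalIntegrable (fun τ => Sα (t - τ) (g τ)) volume t' t)
    (hu : ∀ t' t : ℝ, t' < t →
      u t = Sα (t - t') (ι (u t')) + ∫ τ in t'..t, Sα (t - τ) (g τ)) :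
    ∀ t : ℝ, ‖u t‖ ≤ m₀ * M * (Real.exp (-c) / c + 1 / (1 - α)) :=
  stmt_2_general ι α M c m₀ B hα hM hc Sα hS g hgb u hub hu
end

section
/- Let X be a real Banach space and S : ℝ → (X →L X) a one-parameter group of bounded linear operators, i.e. S(0) = id and S(t+s) = S(t) ∘ S(s) for all t, s ∈ ℝ, such that for some constants M, c > 0 one has ‖S(t) x‖ ≤ M e^{c t} ‖x‖ for all t ≤ 0 and x ∈ X. Let m₀, B > 0, let g : ℝ → X be strongly measurable with ‖g(τ)‖ ≤ m₀ for all τ ∈ ℝ, and let u : ℝ → X satisfy ‖u(t)‖ ≤ B for all t ≥ 0 and u(t) = S(t−t') u(t') + ∫_{t'}^{t} S(t−τ) g(τ) dτ (Bochner integral) for all t' < t. Then ‖u(t)‖ ≤ m₀ M / c for all t ∈ ℝ. -/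
open MeasureTheory Filter Real Topology

/-!
Running the variation-of-constants formula backwards from a time `t > t₀` gives
`u t₀ = S (t₀ - t) (u t) - ∫ τ in t₀..t, S (t₀ - τ) (g τ)`. Since `t₀ - t ≤ 0` and
`t₀ - τ ≤ 0`, both terms are controlled by the backward estimate: the first by
`M e^{c (t₀ - t)} ‖u t‖`, the second by `m₀ M ∫₀^∞ e^{-c s} ds = m₀ M / c`. Boundedness
of `u` on `[0, ∞)` makes the first term vanish as `t → ∞`.
-/

theorem integral_exp_mul_sub {a b c : ℝ} (hc : c ≠ 0) :
    ∫ τ in a..b, exp (c * (a - τ)) = (1 - exp (c * (a - b))) / c := by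
  have hderiv : ∀ τ ∈ Set.uIcc a b,
      HasDerivAt (fun τ => -exp (c * (a - τ)) / c) (exp (c * (a - τ))) τ := by
    intro τ _
    refine ((((hasDerivAt_id τ).const_sub a).const_mul c).exp.neg.div_const c).congr_deriv ?_
    simp [field]
  rw [intervalIntegral.integral_eq_sub_of_hasDerivAt hderiv
    (by apply Continuous.intervalIntegrable; fun_prop)]
  simp only [sub_self, mul_zero, exp_zero]
  ring

theorem integral_exp_mul_sub_le {a b c : ℝ} (hc : 0 < c) :
    ∫ τ in a..b, exp (c * (a - τ)) ≤ 1 / c := by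
  rw [integral_exp_mul_sub hc.ne']
  gcongr
  linarith [exp_pos (c * (a - b))]

theorem norm_integral_le_of_norm_le_exp {E : Type*} [NormedAddCommGroup E] [NormedSpace ℝ E]
    {f : ℝ → E} {a b c K : ℝ} (hab : a ≤ b) (hc : 0 < c) (hK : 0 ≤ K)
    (hf : ∀ τ ∈ Set.Ioc a b, ‖f τ‖ ≤ K * exp (c * (a - τ))) :
    ‖∫ τ in a..b, f τ‖ ≤ K / c := by
  calc ‖∫ τ in a..b, f τ‖ ≤ ∫ τ in a..b, K * exp (c * (a - τ)) :=
        intervalIntegral.norm_integral_le_of_norm_le hab (ae_of_all _ hf)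
          (by apply Continuous.intervalIntegrable; fun_prop)
    _ = K * ∫ τ in a..b, exp (c * (a - τ)) := intervalIntegral.integral_const_mul _ _
    _ ≤ K * (1 / c) := mul_le_mul_of_nonneg_left (integral_exp_mul_sub_le hc) hK
    _ = K / c := mul_one_div K c

section VariationOfConstants

variable {X : Type*} [NormedAddCommGroup X] [NormedSpace ℝ X] [CompleteSpace X]
  {S : ℝ → (X →L[ℝ] X)} {g u : ℝ → X}

theorem eq_sub_integral_of_variation_of_constants
    (hS0 : S 0 = ContinuousLinearMap.id ℝ X)
    (hSgrp : ∀ t s : ℝ, S (t + s) = (S t).comp (S s)) {t₀ t : ℝ}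
    (hint : IntervalIntegrable (fun τ => S (t - τ) (g τ)) volume t₀ t)
    (hu : u t = S (t - t₀) (u t₀) + ∫ τ in t₀..t, S (t - τ) (g τ)) :
    u t₀ = S (t₀ - t) (u t) - ∫ τ in t₀..t, S (t₀ - τ) (g τ) := by
  have hcomp : ∀ a b x, S a (S b x) = S (a + b) x := fun a b x => by rw [hSgrp]; rfl
  rw [hu, map_add, ← (S (t₀ - t)).intervalIntegral_comp_comm hint]
  simp only [hcomp, sub_add_sub_cancel, sub_self, hS0]
  simp

theorem norm_le_of_variation_of_constants
    (hS0 : S 0 = ContinuousLinearMap.id ℝ X)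
    (hSgrp : ∀ t s : ℝ, S (t + s) = (S t).comp (S s))
    {M c m₀ : ℝ} (hM : 0 ≤ M) (hc : 0 < c)
    (hSest : ∀ t : ℝ, t ≤ 0 → ∀ x : X, ‖S t x‖ ≤ M * exp (c * t) * ‖x‖)
    (hgb : ∀ τ : ℝ, ‖g τ‖ ≤ m₀) {t₀ t : ℝ} (ht : t₀ ≤ t)
    (hint : IntervalIntegrable (fun τ => S (t - τ) (g τ)) volume t₀ t)
    (hu : u t = S (t - t₀) (u t₀) + ∫ τ in t₀..t, S (t - τ) (g τ)) :
    ‖u t₀‖ ≤ M * exp (c * (t₀ - t)) * ‖u t‖ + m₀ * M / c := by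
  have hm₀ : 0 ≤ m₀ := (norm_nonneg _).trans (hgb 0)
  have hintegral : ‖∫ τ in t₀..t, S (t₀ - τ) (g τ)‖ ≤ m₀ * M / c := by
    refine norm_integral_le_of_norm_le_exp ht hc (by positivity) fun τ hτ => ?_
    calc ‖S (t₀ - τ) (g τ)‖ ≤ M * exp (c * (t₀ - τ)) * ‖g τ‖ :=
          hSest _ (by linarith [hτ.1]) _
      _ ≤ M * exp (c * (t₀ - τ)) * m₀ := by gcongr; exact hgb τ
      _ = m₀ * M * exp (c * (t₀ - τ)) := by ring
  rw [eq_sub_integral_of_variation_of_constants hS0 hSgrp hint hu]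
  exact (norm_sub_le _ _).trans (add_le_add (hSest _ (by linarith) _) hintegral)

end VariationOfConstants

theorem tendsto_exp_mul_sub_atTop {c : ℝ} (hc : 0 < c) (t₀ : ℝ) :
    Tendsto (fun t => exp (c * (t₀ - t))) atTop (𝓝 0) := by
  refine tendsto_exp_atBot.comp (Tendsto.const_mul_atBot hc ?_)
  exact tendsto_atBot_add_const_left _ t₀ tendsto_neg_atTop_atBot

theorem stmt_3_general
    {X : Type*} [NormedAddCommGroup X] [NormedSpace ℝ X] [CompleteSpace X]
    (S : ℝ → (X →L[ℝ] X))
    (hS0 : S 0 = ContinuousLinearMap.id ℝ X)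
    (hSgrp : ∀ t s : ℝ, S (t + s) = (S t).comp (S s))
    (M c : ℝ) (hM : 0 < M) (hc : 0 < c)
    (hSest : ∀ t : ℝ, t ≤ 0 → ∀ x : X, ‖S t x‖ ≤ M * Real.exp (c * t) * ‖x‖)
    (m₀ B : ℝ)
    (g : ℝ → X) (hgb : ∀ τ : ℝ, ‖g τ‖ ≤ m₀)
    (u : ℝ → X) (hub : ∀ t : ℝ, 0 ≤ t → ‖u t‖ ≤ B)
    (hint : ∀ t' t : ℝ, t' < t →
      IntervalIntegrable (fun τ => S (t - τ) (g τ)) volume t' t)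
    (hu : ∀ t' t : ℝ, t' < t →
      u t = S (t - t') (u t') + ∫ τ in t'..t, S (t - τ) (g τ)) :
    ∀ t : ℝ, ‖u t‖ ≤ m₀ * M / c := by
  intro t₀
  have hlim : Tendsto (fun t => M * exp (c * (t₀ - t)) * B + m₀ * M / c) atTop
      (𝓝 (m₀ * M / c)) := by
    simpa using ((tendsto_exp_mul_sub_atTop hc t₀).const_mul M).mul_const B |>.add_const _
  refine ge_of_tendsto hlim ?_
  filter_upwards [eventually_gt_atTop t₀, eventually_ge_atTop 0] with t ht ht0
  calc ‖u t₀‖ ≤ M * exp (c * (t₀ - t)) * ‖u t‖ + m₀ * M / c :=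
        norm_le_of_variation_of_constants hS0 hSgrp hM.le hc hSest hgb ht.le
          (hint t₀ t ht) (hu t₀ t ht)
    _ ≤ M * exp (c * (t₀ - t)) * B + m₀ * M / c := by gcongr; exact hub t ht0

/-- Abstract form of inequality (fs7) from the proof of Lemma 3.3: a full solution
of the variation-of-constants formula for a group of operators satisfying
`‖S(t)x‖ ≤ M e^{ct}‖x‖` for `t ≤ 0`, which is bounded on `[0, +∞)`, satisfies
the uniform bound `‖u(t)‖ ≤ m₀ M / c`. -/
theorem stmt_3
    {X : Type*} [NormedAddCommGroup X] [NormedSpace ℝ X] [CompleteSpace X]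
    (S : ℝ → (X →L[ℝ] X))
    (hS0 : S 0 = ContinuousLinearMap.id ℝ X)
    (hSgrp : ∀ t s : ℝ, S (t + s) = (S t).comp (S s))
    (M c : ℝ) (hM : 0 < M) (hc : 0 < c)
    (hSest : ∀ t : ℝ, t ≤ 0 → ∀ x : X, ‖S t x‖ ≤ M * Real.exp (c * t) * ‖x‖)
    (m₀ B : ℝ) (hm₀ : 0 < m₀) (hB : 0 < B)
    (g : ℝ → X) (hg : StronglyMeasurable g) (hgb : ∀ τ : ℝ, ‖g τ‖ ≤ m₀)
    (u : ℝ → X) (hub : ∀ t : ℝ, 0 ≤ t → ‖u t‖ ≤ B)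
    (hint : ∀ t' t : ℝ, t' < t →
      IntervalIntegrable (fun τ => S (t - τ) (g τ)) volume t' t)
    (hu : ∀ t' t : ℝ, t' < t →
      u t = S (t - t') (u t') + ∫ τ in t'..t, S (t - τ) (g τ)) :
    ∀ t : ℝ, ‖u t‖ ≤ m₀ * M / c :=
  stmt_3_general S hS0 hSgrp M c hM hc hSest m₀ B g hgb u hub hint hu
end

section
/- Let Ω ⊂ ℝⁿ be a nonempty open bounded set, m > 0, and f : Ω × ℝ × ℝⁿ → ℝ a continuous function with |f(x,s,y)| ≤ m for all (x,s,y). Let f₊, f₋ : Ω → ℝ be continuous functions such that, for every x ∈ Ω, f(x,s,y) → f₊(x) as s → +∞ and f(x,s,y) → f₋(x) as s → −∞, uniformly with respect to y ∈ ℝⁿ. Let X₀ be a finite-dimensional subspace of L²(Ω) such that for every ū ∈ X₀ with ū ≠ 0 the Landesman–Lazer condition (LL1) holds: ∫_{{x : ū(x) > 0}} f₊(x) ū(x) dx + ∫_{{x : ū(x) < 0}} f₋(x) ū(x) dx > 0. Then for every M > 0 there exists R > 0 such that for every measurable w : Ω → ℝ with |w(x)| ≤ M for almost every x ∈ Ω,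 every measurable y : Ω → ℝⁿ, and every ū ∈ X₀ with ‖ū‖_{L²(Ω)} ≥ R, one has ∫_Ω f(x, w(x) + ū(x), y(x)) · ū(x) dx > 0. -/
/-!
Suppose the claim fails for some `M`. Then there are `wₖ`, `yₖ` and `uₖ ∈ X₀` with `‖uₖ‖ → ∞` and
`∫ f(x, wₖ + uₖ, yₖ) uₖ ≤ 0`. The unit sphere of the finite-dimensional space `X₀` is compact, so a
subsequence of `uₖ / ‖uₖ‖` converges in `L²`, and then also a.e., to some `v ∈ X₀` with `‖v‖ = 1`.
Where `v(x) > 0` the argument `wₖ(x) + uₖ(x)` tends to `+∞`, so the uniform limit gives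
`f(x, wₖ + uₖ, yₖ) → f₊(x)`; likewise `f(…) → f₋(x)` where `v(x) < 0`. Since `f` is bounded,
dominated convergence together with the `L²` convergence of `uₖ / ‖uₖ‖` turns
`∫ f(x, wₖ + uₖ, yₖ) uₖ / ‖uₖ‖ ≤ 0` into `∫_{v>0} f₊ v + ∫_{v<0} f₋ v ≤ 0`, contradicting (LL1).
-/

open MeasureTheory Filter Topology TopologicalSpace

theorem TendstoUniformly.tendsto_apply_of_tendsto {ι κ α β : Type*} [UniformSpace β]
    {F : ι → α → β} {c : β} {p : Filter ι} (h : TendstoUniformly F (fun _ => c) p)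
    {l : Filter κ} {s : κ → ι} (hs : Tendsto s l p) (y : κ → α) :
    Tendsto (fun k => F (s k) (y k)) l (𝓝 c) :=
  Uniform.tendsto_nhds_right.2 ((tendstoUniformly_iff_tendsto.1 h).comp (hs.prodMk tendsto_top))

theorem abs_le_of_tendstoUniformly {ι α : Type*} [Nonempty α] {F : ι → α → ℝ} {c m : ℝ}
    {p : Filter ι} [p.NeBot] (h : TendstoUniformly F (fun _ => c) p)
    (hb : ∀ s y, |F s y| ≤ m) : |c| ≤ m :=
  le_of_tendsto ((h.tendsto_apply_of_tendsto tendsto_id fun _ => Classical.arbitrary α).abs)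
    (Eventually.of_forall fun s => hb s _)

theorem ContinuousOn.aestronglyMeasurable_comp {α X β : Type*} [MeasurableSpace α]
    [TopologicalSpace X] [MeasurableSpace X] [OpensMeasurableSpace X] [TopologicalSpace β]
    [PseudoMetrizableSpace β] [SecondCountableTopologyEither X β] {μ : Measure α}
    {g : X → β} {s : Set X} (hg : ContinuousOn g s) (hs : MeasurableSet s) {Φ : α → X}
    (hΦ : AEMeasurable Φ μ) (hΦs : ∀ᵐ a ∂μ, Φ a ∈ s) :
    AEStronglyMeasurable (g ∘ Φ) μ := by
  have hmap : (μ.map Φ).restrict s = μ.map Φ :=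
    Measure.restrict_eq_self_of_ae_mem ((ae_map_iff hΦ hs).2 hΦs)
  exact (hmap ▸ hg.aestronglyMeasurable hs).comp_aemeasurable hΦ

theorem tendsto_add_atTop_of_inv_mul {ι : Type*} {l : Filter ι} {a t z : ι → ℝ} {c M : ℝ}
    (ha : ∀ k, |a k| ≤ M) (ht : Tendsto t l atTop)
    (hz : Tendsto (fun k => (t k)⁻¹ * z k) l (𝓝 c)) (hc : 0 < c) :
    Tendsto (fun k => a k + z k) l atTop := by
  have hz' : Tendsto z l atTop := by
    refine (ht.atTop_mul_pos hc hz).congr' ?_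
    filter_upwards [ht.eventually_gt_atTop 0] with k hk
    rw [mul_inv_cancel_left₀ hk.ne']
  exact tendsto_atTop_add_left_of_le' l (-M)
    (Eventually.of_forall fun k => neg_le_of_abs_le (ha k)) hz'

theorem tendsto_add_atBot_of_inv_mul {ι : Type*} {l : Filter ι} {a t z : ι → ℝ} {c M : ℝ}
    (ha : ∀ k, |a k| ≤ M) (ht : Tendsto t l atTop)
    (hz : Tendsto (fun k => (t k)⁻¹ * z k) l (𝓝 c)) (hc : c < 0) :
    Tendsto (fun k => a k + z k) l atBot := by
  have := tendsto_add_atTop_of_inv_mul (a := -a) (z := -z) (fun k => by simpa using ha k) ht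
    (by simpa using hz.neg) (neg_pos.2 hc)
  simpa [Function.comp_def, add_comm] using tendsto_neg_atTop_atBot.comp this

theorem tendsto_apply_add_mul_of_tendstoUniformly {ι β : Type*} {l : Filter ι}
    {φ : ℝ → β → ℝ} {p q c M : ℝ}
    (hp : TendstoUniformly φ (fun _ => p) atTop) (hq : TendstoUniformly φ (fun _ => q) atBot)
    {a t z : ι → ℝ} (y : ι → β) (ha : ∀ k, |a k| ≤ M) (ht : Tendsto t l atTop)
    (hz : Tendsto (fun k => (t k)⁻¹ * z k) l (𝓝 c)) :
    Tendsto (fun k => φ (a k + z k) (y k) * c) l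
      (𝓝 ((if 0 < c then p * c else 0) + if c < 0 then q * c else 0)) := by
  rcases lt_trichotomy c 0 with hc | rfl | hc
  · simpa [hc, hc.not_gt] using
      (hq.tendsto_apply_of_tendsto (tendsto_add_atBot_of_inv_mul ha ht hz hc) y).mul_const c
  · simpa using tendsto_const_nhds
  · simpa [hc, hc.not_gt] using
      (hp.tendsto_apply_of_tendsto (tendsto_add_atTop_of_inv_mul ha ht hz hc) y).mul_const c

section L2

variable {α : Type*} [MeasurableSpace α] {μ : Measure α} [IsFiniteMeasure μ]

theorem abs_integral_mul_le_of_ae_bound {F : α → ℝ} {m : ℝ} (hm : 0 ≤ m)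
    (hF : AEStronglyMeasurable F μ) (hFb : ∀ᵐ x ∂μ, |F x| ≤ m) (h : Lp ℝ 2 μ) :
    |∫ x, F x * h x ∂μ| ≤ (measureUnivNNReal μ : ℝ) ^ (2⁻¹ : ℝ) * m * ‖h‖ := by
  have hFL : MemLp F 2 μ := MemLp.of_bound hF m (by simpa only [Real.norm_eq_abs] using hFb)
  have hinner : ∫ x, F x * h x ∂μ = inner ℝ (hFL.toLp F) h := by
    rw [L2.inner_def]
    refine integral_congr_ae ?_
    filter_upwards [hFL.coeFn_toLp] with x hx
    simp [hx, mul_comm]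
  have hnorm : ‖hFL.toLp F‖ ≤ (measureUnivNNReal μ : ℝ) ^ (2⁻¹ : ℝ) * m := by
    refine (Lp.norm_le_of_ae_bound hm ?_).trans_eq (by norm_num)
    filter_upwards [hFL.coeFn_toLp, hFb] with x hx hxb
    simpa [hx] using hxb
  rw [hinner]
  exact (abs_real_inner_le_norm _ _).trans (mul_le_mul_of_nonneg_right hnorm (norm_nonneg _))

theorem tendsto_integral_mul_of_tendsto_Lp {ι : Type*} {l : Filter ι} [l.IsCountablyGenerated]
    {F : ι → α → ℝ} {m : ℝ} (hm : 0 ≤ m)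
    {v : ι → Lp ℝ 2 μ} {v₀ : Lp ℝ 2 μ} {g : α → ℝ} (hF : ∀ k, AEStronglyMeasurable (F k) μ)
    (hFb : ∀ k, ∀ᵐ x ∂μ, |F k x| ≤ m) (hv : Tendsto v l (𝓝 v₀))
    (hg : ∀ᵐ x ∂μ, Tendsto (fun k => F k x * v₀ x) l (𝓝 (g x))) :
    Tendsto (fun k => ∫ x, F k x * v k x ∂μ) l (𝓝 (∫ x, g x ∂μ)) := by
  have hint : ∀ k (h : Lp ℝ 2 μ), Integrable (fun x => F k x * h x) μ := fun k h =>
    ((Lp.memLp h).integrable one_le_two).bdd_mul (hF k)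
      (by simpa only [Real.norm_eq_abs] using hFb k)
  have hmain : Tendsto (fun k => ∫ x, F k x * v₀ x ∂μ) l (𝓝 (∫ x, g x ∂μ)) := by
    refine tendsto_integral_filter_of_dominated_convergence (fun x => m * |v₀ x|)
      (Eventually.of_forall fun k => (hF k).mul (Lp.aestronglyMeasurable v₀))
      (Eventually.of_forall fun k => ?_)
      (((Lp.memLp v₀).integrable one_le_two).abs.const_mul m) hg
    filter_upwards [hFb k] with x hx
    rw [Real.norm_eq_abs, abs_mul]
    exact mul_le_mul_of_nonneg_right hx (abs_nonneg _)
  have hrem : Tendsto (fun k => ∫ x, F k x * (v k - v₀ : Lp ℝ 2 μ) x ∂μ) l (𝓝 0) := by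
    refine squeeze_zero_norm (fun k => abs_integral_mul_le_of_ae_bound hm (hF k) (hFb k) _) ?_
    simpa using ((hv.sub_const v₀).norm.const_mul _)
  have hsplit : ∀ k, ∫ x, F k x * v k x ∂μ =
      ∫ x, F k x * v₀ x ∂μ + ∫ x, F k x * (v k - v₀ : Lp ℝ 2 μ) x ∂μ := fun k => by
    rw [← integral_add (hint k v₀) (hint k _)]
    refine integral_congr_ae ?_
    filter_upwards [Lp.coeFn_sub (v k) v₀] with x hx
    rw [hx, Pi.sub_apply]
    ring
  simpa [hsplit] using hmain.add hrem

end L2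

theorem Submodule.exists_subseq_tendsto_inv_norm_smul {E : Type*} [NormedAddCommGroup E]
    [NormedSpace ℝ E] (X₀ : Submodule ℝ E) [FiniteDimensional ℝ X₀] {u : ℕ → E}
    (hu : ∀ k, u k ∈ X₀) (hu0 : ∀ k, u k ≠ 0) :
    ∃ v ∈ X₀, v ≠ 0 ∧ ∃ φ : ℕ → ℕ, StrictMono φ ∧
      Tendsto (fun k => ‖u (φ k)‖⁻¹ • u (φ k)) atTop (𝓝 v) := by
  have : ProperSpace X₀ := FiniteDimensional.proper ℝ X₀
  have hsphere : ∀ k, ‖u k‖⁻¹ • (⟨u k, hu k⟩ : X₀) ∈ Metric.sphere (0 : X₀) 1 := fun k => by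
    simp [norm_smul, hu0 k]
  obtain ⟨v, hv, φ, hφ, hlim⟩ := (isCompact_sphere (0 : X₀) 1).tendsto_subseq hsphere
  refine ⟨v, v.2, ?_, φ, hφ, (continuous_subtype_val.tendsto v).comp hlim⟩
  simpa using ne_zero_of_mem_unit_sphere ⟨v, hv⟩

theorem landesmanLazer_integral_nonpos {α β : Type*} [MeasurableSpace α] [Nonempty β]
    {μ : Measure α} [IsFiniteMeasure μ] {f : α → ℝ → β → ℝ} {fp fm : α → ℝ} {m M : ℝ}
    (hm : 0 ≤ m) (hfb : ∀ᵐ x ∂μ, ∀ s y, |f x s y| ≤ m)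
    (hlimp : ∀ᵐ x ∂μ, TendstoUniformly (f x) (fun _ => fp x) atTop)
    (hlimm : ∀ᵐ x ∂μ, TendstoUniformly (f x) (fun _ => fm x) atBot)
    (hfp : AEStronglyMeasurable fp μ) (hfm : AEStronglyMeasurable fm μ)
    {w : ℕ → α → ℝ} {y : ℕ → α → β} {u : ℕ → Lp ℝ 2 μ} {v : Lp ℝ 2 μ}
    (hw : ∀ k, ∀ᵐ x ∂μ, |w k x| ≤ M)
    (hF : ∀ k, AEStronglyMeasurable (fun x => f x (w k x + u k x) (y k x)) μ)
    (hu : Tendsto (fun k => ‖u k‖) atTop atTop)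
    (hv : Tendsto (fun k => ‖u k‖⁻¹ • u k) atTop (𝓝 v))
    (hvae : ∀ᵐ x ∂μ, Tendsto (fun k => (‖u k‖⁻¹ • u k) x) atTop (𝓝 (v x)))
    (hneg : ∀ k, ∫ x, f x (w k x + u k x) (y k x) * u k x ∂μ ≤ 0) :
    (∫ x in {x | 0 < v x}, fp x * v x ∂μ) + ∫ x in {x | v x < 0}, fm x * v x ∂μ ≤ 0 := by
  have hsmul : ∀ᵐ x ∂μ, ∀ k, (‖u k‖⁻¹ • u k) x = ‖u k‖⁻¹ * u k x :=
    ae_all_iff.2 fun k => Lp.coeFn_smul _ (u k)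
  have hlim := tendsto_integral_mul_of_tendsto_Lp hm hF (fun k => hfb.mono fun x hx => hx _ _) hv
    (g := fun x => {x | 0 < v x}.indicator (fun x => fp x * v x) x +
      {x | v x < 0}.indicator (fun x => fm x * v x) x) (by
    filter_upwards [hlimp, hlimm, hvae, hsmul, ae_all_iff.2 hw] with x hp hq hx hs hwx
    simp only [Set.indicator_apply, Set.mem_ofPred_eq]
    exact tendsto_apply_add_mul_of_tendstoUniformly hp hq _ hwx hu (by simpa only [hs] using hx))
  have hvi : Integrable v μ := (Lp.memLp v).integrable one_le_two
  have hvpos : MeasurableSet {x | 0 < v x} :=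
    measurableSet_lt measurable_const (Lp.stronglyMeasurable v).measurable
  have hvneg : MeasurableSet {x | v x < 0} :=
    measurableSet_lt (Lp.stronglyMeasurable v).measurable measurable_const
  have hfpv : Integrable (fun x => fp x * v x) μ := hvi.bdd_mul hfp (c := m) (by
    filter_upwards [hfb, hlimp] with x hb hp using abs_le_of_tendstoUniformly hp hb)
  have hfmv : Integrable (fun x => fm x * v x) μ := hvi.bdd_mul hfm (c := m) (by
    filter_upwards [hfb, hlimm] with x hb hq using abs_le_of_tendstoUniformly hq hb)
  rw [integral_add (hfpv.indicator hvpos) (hfmv.indicator hvneg), integral_indicator hvpos,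
    integral_indicator hvneg] at hlim
  refine le_of_tendsto' hlim fun k => ?_
  calc ∫ x, f x (w k x + u k x) (y k x) * (‖u k‖⁻¹ • u k) x ∂μ
      = ‖u k‖⁻¹ * ∫ x, f x (w k x + u k x) (y k x) * u k x ∂μ := by
        rw [← integral_const_mul]
        refine integral_congr_ae ?_
        filter_upwards [hsmul] with x hx
        rw [hx k]
        ring
    _ ≤ 0 := mul_nonpos_of_nonneg_of_nonpos (inv_nonneg.2 (norm_nonneg _)) (hneg k)

theorem stmt_5_general
    {n : ℕ} (Ω : Set (Fin n → ℝ)) (hΩo : IsOpen Ω)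
    (hΩb : Bornology.IsBounded Ω)
    (m : ℝ) (hm : 0 < m)
    (f : (Fin n → ℝ) → ℝ → (Fin n → ℝ) → ℝ)
    (hf : ContinuousOn (fun p : (Fin n → ℝ) × ℝ × (Fin n → ℝ) => f p.1 p.2.1 p.2.2)
      (Ω ×ˢ (Set.univ : Set (ℝ × (Fin n → ℝ)))))
    (hfb : ∀ x ∈ Ω, ∀ (s : ℝ) (y : Fin n → ℝ), |f x s y| ≤ m)
    (fp fm : (Fin n → ℝ) → ℝ)
    (hfpc : ContinuousOn fp Ω) (hfmc : ContinuousOn fm Ω)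
    (hlimp : ∀ x ∈ Ω, TendstoUniformly (fun (s : ℝ) (y : Fin n → ℝ) => f x s y)
      (fun _ => fp x) atTop)
    (hlimm : ∀ x ∈ Ω, TendstoUniformly (fun (s : ℝ) (y : Fin n → ℝ) => f x s y)
      (fun _ => fm x) atBot)
    (X₀ : Submodule ℝ (Lp ℝ 2 (volume.restrict Ω))) (hX₀ : FiniteDimensional ℝ X₀)
    (hLL1 : ∀ u : Lp ℝ 2 (volume.restrict Ω), u ∈ X₀ → u ≠ 0 →
      0 < (∫ x in {x | 0 < u x}, fp x * u x ∂(volume.restrict Ω)) +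
          ∫ x in {x | u x < 0}, fm x * u x ∂(volume.restrict Ω)) :
    ∀ M : ℝ, 0 < M → ∃ R : ℝ, 0 < R ∧
      ∀ w : (Fin n → ℝ) → ℝ, Measurable w →
        (∀ᵐ x ∂(volume.restrict Ω), |w x| ≤ M) →
      ∀ y : (Fin n → ℝ) → (Fin n → ℝ), Measurable y →
      ∀ u : Lp ℝ 2 (volume.restrict Ω), u ∈ X₀ → R ≤ ‖u‖ →
        0 < ∫ x, f x (w x + u x) (y x) * u x ∂(volume.restrict Ω) := by
  intro M _
  have : IsFiniteMeasure (volume.restrict Ω) :=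
    isFiniteMeasure_restrict.2 hΩb.measure_lt_top.ne
  have hΩae : ∀ᵐ x ∂(volume.restrict Ω), x ∈ Ω := ae_restrict_mem hΩo.measurableSet
  by_contra! hcon
  choose w hw hwM y hy u huX hu hneg using fun k : ℕ => hcon (k + 1) (by positivity)
  have hF : ∀ k, AEStronglyMeasurable (fun x => f x (w k x + u k x) (y k x))
      (volume.restrict Ω) := fun k =>
    hf.aestronglyMeasurable_comp (hΩo.measurableSet.prod .univ)
      (Φ := fun x => (x, w k x + u k x, y k x))
      (aemeasurable_id.prodMk (((hw k).aemeasurable.add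
        (Lp.aestronglyMeasurable (u k)).aemeasurable).prodMk (hy k).aemeasurable))
      (hΩae.mono fun x hx => ⟨hx, trivial⟩)
  have hu0 : ∀ k, u k ≠ 0 := fun k =>
    norm_pos_iff.1 ((Nat.cast_add_one_pos k).trans_le (hu k))
  obtain ⟨v, hvX, hv0, φ, hφ, hv⟩ := X₀.exists_subseq_tendsto_inv_norm_smul huX hu0
  obtain ⟨ψ, hψ, hvae⟩ := (tendstoInMeasure_of_tendsto_Lp hv).exists_seq_tendsto_ae
  have hχ : Tendsto (fun k => ‖u (φ (ψ k))‖) atTop atTop :=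
    tendsto_atTop_mono (fun k => (le_add_of_nonneg_right zero_le_one).trans (hu _))
      (tendsto_natCast_atTop_atTop.comp (hφ.comp hψ).tendsto_atTop)
  exact (hLL1 v hvX hv0).not_ge <| landesmanLazer_integral_nonpos hm.le
    (hΩae.mono fun x hx => hfb x hx) (hΩae.mono fun x hx => hlimp x hx)
    (hΩae.mono fun x hx => hlimm x hx) (hfpc.aestronglyMeasurable hΩo.measurableSet)
    (hfmc.aestronglyMeasurable hΩo.measurableSet) (fun k => hwM _) (fun k => hF _) hχ
    (hv.comp hψ.tendsto_atTop) hvae (fun k => hneg _)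

/-- Theorem 4.3(i) of the paper: the Landesman–Lazer condition (LL1) implies the
geometric condition (G1) for the Niemytzki operator. -/
theorem stmt_5
    {n : ℕ} (Ω : Set (Fin n → ℝ)) (hΩne : Ω.Nonempty) (hΩo : IsOpen Ω)
    (hΩb : Bornology.IsBounded Ω)
    (m : ℝ) (hm : 0 < m)
    (f : (Fin n → ℝ) → ℝ → (Fin n → ℝ) → ℝ)
    (hf : ContinuousOn (fun p : (Fin n → ℝ) × ℝ × (Fin n → ℝ) => f p.1 p.2.1 p.2.2)
      (Ω ×ˢ (Set.univ : Set (ℝ × (Fin n → ℝ)))))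
    (hfb : ∀ x ∈ Ω, ∀ (s : ℝ) (y : Fin n → ℝ), |f x s y| ≤ m)
    (fp fm : (Fin n → ℝ) → ℝ)
    (hfpc : ContinuousOn fp Ω) (hfmc : ContinuousOn fm Ω)
    (hlimp : ∀ x ∈ Ω, TendstoUniformly (fun (s : ℝ) (y : Fin n → ℝ) => f x s y)
      (fun _ => fp x) atTop)
    (hlimm : ∀ x ∈ Ω, TendstoUniformly (fun (s : ℝ) (y : Fin n → ℝ) => f x s y)
      (fun _ => fm x) atBot)
    (X₀ : Submodule ℝ (Lp ℝ 2 (volume.restrict Ω))) (hX₀ : FiniteDimensional ℝ X₀)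
    (hLL1 : ∀ u : Lp ℝ 2 (volume.restrict Ω), u ∈ X₀ → u ≠ 0 →
      0 < (∫ x in {x | 0 < u x}, fp x * u x ∂(volume.restrict Ω)) +
          ∫ x in {x | u x < 0}, fm x * u x ∂(volume.restrict Ω)) :
    ∀ M : ℝ, 0 < M → ∃ R : ℝ, 0 < R ∧
      ∀ w : (Fin n → ℝ) → ℝ, Measurable w →
        (∀ᵐ x ∂(volume.restrict Ω), |w x| ≤ M) →
      ∀ y : (Fin n → ℝ) → (Fin n → ℝ), Measurable y →
      ∀ u : Lp ℝ 2 (volume.restrict Ω), u ∈ X₀ → R ≤ ‖u‖ →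
        0 < ∫ x, f x (w x + u x) (y x) * u x ∂(volume.restrict Ω) :=
  stmt_5_general Ω hΩo hΩb m hm f hf hfb fp fm hfpc hfmc hlimp hlimm X₀ hX₀ hLL1
end
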